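/- arXiv:2008.01609 — 4 statements merged into one kernel-verified Lean document; each statement's English description precedes it below -/
import Mathlib

section
/- For any locally complete graph-like justification J in a justification frame and any defined fact x labelling an internal node of J, there exists a connected, locally complete graph-like justification J' with x as a root such that for every interpretation I, the value of x by J under I is less than or equal (in the truth order) to the value of x by J' under I. -/
namespace JT

open scoped Classical

/-- Three truth values: 0 = 𝐟, 1 = 𝐮, 2 = 𝐭, with the truth order. -/
abbrev TV := Fin 3

/-- Complement on truth values: swaps 𝐭 and 𝐟, fixes 𝐮. -/
def TV.neg (v : TV) : TV := 2 - v

/-- A justification frame over a fact space `F`. -/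
structure JFrame (F : Type) where
  compl : F → F
  compl_invol : ∀ x, compl (compl x) = x
  tLit : F
  fLit : F
  uLit : F
  compl_t : compl tLit = fLit
  compl_u : compl uLit = uLit
  lit_distinct : tLit ≠ fLit ∧ tLit ≠ uLit ∧ fLit ≠ uLit
  defined : Set F
  defined_compl : ∀ x ∈ defined, compl x ∈ defined
  t_not_def : tLit ∉ defined
  f_not_def : fLit ∉ defined
  u_not_def : uLit ∉ defined
  rules : Set (F × Set F)
  rules_head : ∀ r ∈ rules, r.1 ∈ defined
  rules_body_ne : ∀ r ∈ rules, r.2.Nonempty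
  rules_ex : ∀ x ∈ defined, ∃ A : Set F, (x, A) ∈ rules

variable {F : Type}

def JFrame.openF (JF : JFrame F) : Set F := JF.definedᶜ

/-- A (three-valued) interpretation of the fact space. -/
structure Interp (JF : JFrame F) where
  val : F → TV
  val_compl : ∀ x, val (JF.compl x) = TV.neg (val x)
  val_t : val JF.tLit = 2
  val_f : val JF.fLit = 0
  val_u : val JF.uLit = 1

/-- Branches: finite (the whole finite sequence, as a list) or infinite. -/
inductive Branch (F : Type) where
  | fin : List F → Branch F
  | inf : (ℕ → F) → Branch F

def Branch.startsAt : Branch F → F → Prop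
  | .fin l, x => l.head? = some x
  | .inf s, x => s 0 = x

/-- `b` is a `JF`-branch: an infinite sequence in `F_d`, or a finite nonempty
sequence in `F_d` followed by an open fact. -/
def JFrame.IsBranch (JF : JFrame F) : Branch F → Prop
  | .fin l => 2 ≤ l.length ∧ (∀ a ∈ l.dropLast, a ∈ JF.defined) ∧
      (∀ e, l.getLast? = some e → e ∉ JF.defined)
  | .inf s => ∀ n, s n ∈ JF.defined

/-- Prepend a finite path `p` to a branch. -/
def Branch.prepend (p : List F) : Branch F → Branch F
  | .fin l => .fin (p ++ l)
  | .inf s => .inf (fun n => if h : n < p.length then p.get ⟨n, h⟩ else s (n - p.length))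

/-- Elementwise complement of a branch. -/
def Branch.compl (JF : JFrame F) : Branch F → Branch F
  | .fin l => .fin (l.map JF.compl)
  | .inf s => .inf (fun n => JF.compl (s n))

/-- A branch evaluation is consistent if `B(~b) = ~B(b)`. -/
def JFrame.ConsistentBE (JF : JFrame F) (B : Branch F → F) : Prop :=
  ∀ b : Branch F, JF.IsBranch b → B (Branch.compl JF b) = JF.compl (B b)

/-- A graph-like justification (labels are injective, so nodes are facts). -/
structure GraphJust (JF : JFrame F) where
  nodes : Set F
  edges : Set (F × F)
  edges_mem : ∀ e ∈ edges, e.1 ∈ nodes ∧ e.2 ∈ nodes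
  rule_of_internal : ∀ x ∈ nodes, (∃ y, (x, y) ∈ edges) →
      (x, {y | (x, y) ∈ edges}) ∈ JF.rules

namespace GraphJust
variable {JF : JFrame F}

def LocallyComplete (J : GraphJust JF) : Prop :=
  ∀ x ∈ J.nodes, x ∈ JF.defined → ∃ y, (x, y) ∈ J.edges

def Connected (J : GraphJust JF) : Prop :=
  ∀ x ∈ J.nodes, ∀ y ∈ J.nodes,
    Relation.ReflTransGen (fun a b => (a, b) ∈ J.edges ∨ (b, a) ∈ J.edges) x y

def IsRoot (J : GraphJust JF) (x : F) : Prop :=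
  x ∈ J.nodes ∧ ∀ y ∈ J.nodes, Relation.ReflTransGen (fun a b => (a, b) ∈ J.edges) x y

/-- `J`-branches starting in `x`: maximal paths in `J` from `x`. -/
def IsBranchFrom (J : GraphJust JF) (x : F) : Branch F → Prop
  | .fin l => l.head? = some x ∧ (∀ a ∈ l, a ∈ J.nodes) ∧
      List.Chain' (fun a b => (a, b) ∈ J.edges) l ∧
      (∀ e, l.getLast? = some e → ∀ y, (e, y) ∉ J.edges)
  | .inf s => s 0 = x ∧ (∀ n, s n ∈ J.nodes) ∧ (∀ n, (s n, s (n+1)) ∈ J.edges)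

/-- The value of `x` by `J` under `I`. -/
noncomputable def val (J : GraphJust JF) (B : Branch F → F) (x : F) (I : Interp JF) : TV :=
  ⨅ b ∈ {b | J.IsBranchFrom x b}, I.val (B b)

end GraphJust

/-- Underlying undirected simple graph of a directed relation. -/
def symGraph {α : Type} (e : α → α → Prop) : SimpleGraph α where
  Adj a b := a ≠ b ∧ (e a b ∨ e b a)
  symm := ⟨fun _ _ h => ⟨Ne.symm h.1, h.2.symm⟩⟩
  loopless := ⟨fun _ h => h.1 rfl⟩

/-- A tree-like justification: a directed labelled graph whose underlying
undirected graph is a forest. -/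
structure TreeJust (JF : JFrame F) where
  Node : Type
  edge : Node → Node → Prop
  label : Node → F
  rule_of_internal : ∀ n, (∃ m, edge n m) →
      (label n, {y | ∃ m, edge n m ∧ label m = y}) ∈ JF.rules
  forest : (symGraph edge).IsAcyclic

namespace TreeJust
variable {JF : JFrame F}

def LocallyComplete (T : TreeJust JF) : Prop :=
  ∀ n, T.label n ∈ JF.defined → ∃ m, T.edge n m

def Connected (T : TreeJust JF) : Prop :=
  ∀ a b : T.Node, Relation.ReflTransGen (fun u v => T.edge u v ∨ T.edge v u) a b

def IsRoot (T : TreeJust JF) (x : F) : Prop :=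
  ∃ n, T.label n = x ∧ ∀ m, Relation.ReflTransGen T.edge n m

def IsBranchFrom (T : TreeJust JF) (x : F) : Branch F → Prop
  | .fin l => ∃ ns : List T.Node, List.Chain' T.edge ns ∧ ns.map T.label = l ∧
      l.head? = some x ∧ (∀ nl, ns.getLast? = some nl → ∀ m, ¬ T.edge nl m)
  | .inf s => ∃ ns : ℕ → T.Node, (∀ n, T.edge (ns n) (ns (n+1))) ∧
      (∀ n, T.label (ns n) = s n) ∧ s 0 = x

noncomputable def val (T : TreeJust JF) (B : Branch F → F) (x : F) (I : Interp JF) : TV :=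
  ⨅ b ∈ {b | T.IsBranchFrom x b}, I.val (B b)

end TreeJust

/-- Graph-like supported value. -/
noncomputable def SVg (JF : JFrame F) (B : Branch F → F) (x : F) (I : Interp JF) : TV :=
  if x ∈ JF.defined then
    ⨆ J ∈ {J : GraphJust JF | J.LocallyComplete ∧ x ∈ J.nodes}, J.val B x I
  else I.val x

/-- Tree-like supported value. -/
noncomputable def SVt (JF : JFrame F) (B : Branch F → F) (x : F) (I : Interp JF) : TV :=
  if x ∈ JF.defined then
    ⨆ (T : TreeJust JF) (_ : T.LocallyComplete ∧ ∃ n, T.label n = x), T.val B x I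
  else I.val x

/-! ### Games -/

/-- A game graph: states owned by player 𝐓 (`T`) or by player 𝐅 (`Tᶜ`), edges `E`. -/
structure GameGraph (S : Type) where
  T : Set S
  E : Set (S × S)

namespace GameGraph
variable {S : Type}

def IsPath (G : GameGraph S) (p : List S) : Prop :=
  p ≠ [] ∧ List.Chain' (fun a b => (a, b) ∈ G.E) p

end GameGraph

/-- A general strategy for the player owning the states in `P`. -/
structure GenStrat {S : Type} (G : GameGraph S) (P : Set S) where
  next : List S → S
  next_ok : ∀ p s, G.IsPath p → p.getLast? = some s → s ∈ P →
      (∃ t2, (s, t2) ∈ G.E) → (s, next p) ∈ G.E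

/-- A positional strategy for the player owning the states in `P`. -/
structure PosStrat {S : Type} (G : GameGraph S) (P : Set S) where
  move : S → S
  move_ok : ∀ s ∈ P, (∃ t2, (s, t2) ∈ G.E) → (s, move s) ∈ G.E

/-- The embedding of positional strategies into general strategies. -/
noncomputable def PosStrat.toGen {S : Type} [Nonempty S] {G : GameGraph S} {P : Set S}
    (σ : PosStrat G P) : GenStrat G P where
  next p := σ.move (p.getLastD (Classical.arbitrary S))
  next_ok := by
    intro p s _ hlast hsP hout
    have h : p.getLastD (Classical.arbitrary S) = s := by
      rw [List.getLastD_eq_getLast?, hlast]; rfl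
    show (s, σ.move (p.getLastD (Classical.arbitrary S))) ∈ G.E
    rw [h]; exact σ.move_ok s hsP hout

/-- The finite prefixes of the unique play from `x` consistent with both strategies. -/
noncomputable def GameGraph.playPrefix {S : Type} (G : GameGraph S)
    (σ : GenStrat G G.T) (τ : GenStrat G G.Tᶜ) (x : S) : ℕ → List S
  | 0 => [x]
  | n + 1 =>
    let p := G.playPrefix σ τ x n
    match p.getLast? with
    | none => p
    | some s =>
      if (∃ t2, (s, t2) ∈ G.E) then
        p ++ [if s ∈ G.T then σ.next p else τ.next p]
      else p

/-- The trace of the play from `x`: the state at each time step, if any. -/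
noncomputable def GameGraph.playTrace {S : Type} (G : GameGraph S)
    (σ : GenStrat G G.T) (τ : GenStrat G G.Tᶜ) (x : S) : ℕ → Option S :=
  fun n => (G.playPrefix σ τ x n)[n]?

/-- Value of the play from `x`, for a valuation `v` of plays (given by traces). -/
noncomputable def GameGraph.uval {S V : Type} [CompleteLinearOrder V] (G : GameGraph S)
    (v : (ℕ → Option S) → V) (x : S) (σ : GenStrat G G.T) (τ : GenStrat G G.Tᶜ) : V :=
  v (G.playTrace σ τ x)

/-- Optimal pair of strategies. -/
def GameGraph.OptimalPair {S V : Type} [CompleteLinearOrder V] (G : GameGraph S)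
    (v : (ℕ → Option S) → V) (σs : GenStrat G G.T) (τs : GenStrat G G.Tᶜ) : Prop :=
  ∀ s : S, (∀ σ, G.uval v s σ τs ≤ G.uval v s σs τs) ∧
    (∀ τ, G.uval v s σs τs ≤ G.uval v s σs τ)

/-! ### The justification game -/

/-- Rule symbols `r_{x ← A}`. -/
def RuleSym (JF : JFrame F) : Type := {r : F × Set F // r ∈ JF.rules}

/-- States of the justification game: facts (owned by 𝐓) and rule symbols (owned by 𝐅). -/
abbrev GState (JF : JFrame F) : Type := F ⊕ RuleSym JF

instance (JF : JFrame F) : Nonempty (GState JF) := ⟨Sum.inl JF.tLit⟩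

/-- The game graph `G_JF` associated to a justification frame. -/
def JFrame.game (JF : JFrame F) : GameGraph (GState JF) where
  T := Set.range Sum.inl
  E := {e | (∃ (x : F) (r : RuleSym JF), e = (Sum.inl x, Sum.inr r) ∧ r.1.1 = x) ∨
            (∃ (r : RuleSym JF) (y : F), e = (Sum.inr r, Sum.inl y) ∧ y ∈ r.1.2)}

/-- The `JF`-branch obtained from the play from `s` by filtering out rule symbols. -/
noncomputable def JFrame.playBranch (JF : JFrame F)
    (σ : GenStrat JF.game JF.game.T) (τ : GenStrat JF.game JF.game.Tᶜ)
    (s : GState JF) : Branch F :=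
  if h : ∃ n, JF.game.playPrefix σ τ s (n+1) = JF.game.playPrefix σ τ s n then
    .fin ((JF.game.playPrefix σ τ s (Nat.find h)).filterMap Sum.getLeft?)
  else
    .inf (fun k => ((JF.game.playPrefix σ τ s (2*k+2)).filterMap Sum.getLeft?).getD k JF.tLit)

/-- `u(s, σ, τ) = I(B(b_{play(s,σ,τ)}))`. -/
noncomputable def JFrame.uS (JF : JFrame F) (B : Branch F → F) (I : Interp JF)
    (s : GState JF) (σ : GenStrat JF.game JF.game.T) (τ : GenStrat JF.game JF.game.Tᶜ) : TV :=
  I.val (B (JF.playBranch σ τ s))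

/-- Optimal pair of strategies in the justification game `G_{JS,I}`. -/
def JFrame.OptPair (JF : JFrame F) (B : Branch F → F) (I : Interp JF)
    (σs : GenStrat JF.game JF.game.T) (τs : GenStrat JF.game JF.game.Tᶜ) : Prop :=
  ∀ s : GState JF, (∀ σ, JF.uS B I s σ τs ≤ JF.uS B I s σs τs) ∧
    (∀ τ, JF.uS B I s σs τs ≤ JF.uS B I s σs τ)

/-! ### Play graphs of positional strategies, filtered -/

/-- Steps consistent with a positional strategy for 𝐓. -/
def JFrame.stepT (JF : JFrame F) (σ : PosStrat JF.game JF.game.T)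
    (a b : GState JF) : Prop :=
  (a, b) ∈ JF.game.E ∧ (a ∈ JF.game.T → b = σ.move a)

def JFrame.reachT (JF : JFrame F) (σ : PosStrat JF.game JF.game.T) (x : F) :
    Set (GState JF) :=
  {s | Relation.ReflTransGen (JF.stepT σ) (Sum.inl x) s}

/-- Nodes of the play graph of `σ` at `x` with rule symbols filtered out. -/
def JFrame.filtNodesT (JF : JFrame F) (σ : PosStrat JF.game JF.game.T) (x : F) : Set F :=
  {y | Sum.inl y ∈ JF.reachT σ x}

/-- Edges of the play graph of `σ` at `x` with rule symbols filtered out. -/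
def JFrame.filtEdgesT (JF : JFrame F) (σ : PosStrat JF.game JF.game.T) (x : F) :
    Set (F × F) :=
  {e | ∃ r : RuleSym JF, Sum.inl e.1 ∈ JF.reachT σ x ∧
      JF.stepT σ (Sum.inl e.1) (Sum.inr r) ∧ JF.stepT σ (Sum.inr r) (Sum.inl e.2)}

/-- Steps consistent with a positional strategy for 𝐅. -/
def JFrame.stepF (JF : JFrame F) (τ : PosStrat JF.game JF.game.Tᶜ)
    (a b : GState JF) : Prop :=
  (a, b) ∈ JF.game.E ∧ (a ∈ JF.game.Tᶜ → b = τ.move a)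

def JFrame.reachF (JF : JFrame F) (τ : PosStrat JF.game JF.game.Tᶜ) (x : F) :
    Set (GState JF) :=
  {s | Relation.ReflTransGen (JF.stepF τ) (Sum.inl x) s}

/-- Nodes of the play graph of `τ` at `x`, rule symbols filtered out, labels negated. -/
def JFrame.filtNodesF (JF : JFrame F) (τ : PosStrat JF.game JF.game.Tᶜ) (x : F) : Set F :=
  {w | ∃ y : F, w = JF.compl y ∧ Sum.inl y ∈ JF.reachF τ x}

/-- Edges of the play graph of `τ` at `x`, rule symbols filtered out, labels negated. -/
def JFrame.filtEdgesF (JF : JFrame F) (τ : PosStrat JF.game JF.game.Tᶜ) (x : F) :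
    Set (F × F) :=
  {e | ∃ (y z : F) (r : RuleSym JF), e = (JF.compl y, JF.compl z) ∧
      Sum.inl y ∈ JF.reachF τ x ∧
      JF.stepF τ (Sum.inl y) (Sum.inr r) ∧ JF.stepF τ (Sum.inr r) (Sum.inl z)}

/-! ### Complementation -/

/-- A selection function for `x` chooses an element from the body of each rule of `x`. -/
def JFrame.SelectionFn (JF : JFrame F) (x : F) : Type :=
  {s : {A : Set F // (x, A) ∈ JF.rules} → F // ∀ A, s A ∈ A.1}

/-- `JF` is complementary: fixed under complementation, i.e. for each defined `x` and
selection function `s` for `x`, the rule `~x ← ~Im(s)` belongs to the rules. -/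
def JFrame.Complementary (JF : JFrame F) : Prop :=
  ∀ x ∈ JF.defined, ∀ s : JF.SelectionFn x,
    (JF.compl x, JF.compl '' Set.range s.1) ∈ JF.rules

/-! ### Monotone, selective, transitive branch evaluations -/

/-- Monotone branch evaluation. -/
def JFrame.MonotoneBE (JF : JFrame F) (B : Branch F → F) : Prop :=
  ∀ (I : Interp JF) (x : F), x ∈ JF.defined →
    ∀ b1 b2 : Branch F, JF.IsBranch b1 → JF.IsBranch b2 →
      b1.startsAt x → b2.startsAt x →
      ∀ p : List F, (∀ a ∈ p, a ∈ JF.defined) →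
        I.val (B b1) ≤ I.val (B b2) →
        I.val (B (Branch.prepend p b1)) ≤ I.val (B (Branch.prepend p b2))

/-- Transitive branch evaluation: dropping the first element of a branch with at
least three elements does not change its value. -/
def JFrame.TransitiveBE (JF : JFrame F) (B : Branch F → F) : Prop :=
  ∀ (x0 : F) (b : Branch F), JF.IsBranch b → B (Branch.prepend [x0] b) = B b

/-- A finite loop starting in `x`. -/
def JFrame.IsLoopAt (JF : JFrame F) (x : F) (q : List F) : Prop :=
  q.head? = some x ∧ ∀ a ∈ q, a ∈ JF.defined

/-- Finite iterations of loops from `L`. -/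
def FinIter (L : Set (List F)) : Set (List F) :=
  {w | ∃ ls : List (List F), (∀ l ∈ ls, l ∈ L) ∧ w = ls.flatten}

/-- `s` is the concatenation of the infinite sequence of lists `f`. -/
def IsConcat (f : ℕ → List F) (s : ℕ → F) : Prop :=
  ∃ c : ℕ → ℕ, c 0 = 0 ∧ (∀ i, c (i+1) = c i + (f i).length) ∧
    ∀ i k (h : k < (f i).length), s (c i + k) = (f i).get ⟨k, h⟩

/-- `L^ω`: infinite iterations of loops from `L`, as branches. -/
def InfIter (L : Set (List F)) : Set (Branch F) :=
  {b | ∃ (f : ℕ → List F) (s : ℕ → F), (∀ i, f i ∈ L) ∧ (∀ i, f i ≠ []) ∧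
      IsConcat f s ∧ b = .inf s}

/-- `p L* K`. -/
def StarKSet (p : List F) (L : Set (List F)) (K : Set (Branch F)) : Set (Branch F) :=
  {b | ∃ w ∈ FinIter L, ∃ k ∈ K, b = Branch.prepend (p ++ w) k}

/-- `p L^ω`. -/
def OmegaSet (p : List F) (L : Set (List F)) : Set (Branch F) :=
  {b | ∃ b0 ∈ InfIter L, b = Branch.prepend p b0}

/-- `p K`. -/
def PrepSet (p : List F) (K : Set (Branch F)) : Set (Branch F) :=
  (Branch.prepend p) '' K

/-- Selective branch evaluation with respect to `I`. -/
def JFrame.SelectiveBE (JF : JFrame F) (B : Branch F → F) (I : Interp JF) : Prop :=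
  ∀ p : List F, (∀ a ∈ p, a ∈ JF.defined) →
  ∀ x ∈ JF.defined,
  ∀ M N : Set (List F), (∀ q ∈ M, JF.IsLoopAt x q) → (∀ q ∈ N, JF.IsLoopAt x q) →
  ∀ K : Set (Branch F), (∀ b ∈ K, JF.IsBranch b ∧ b.startsAt x) →
  ∀ b ∈ StarKSet p (M ∪ N) K ∪ OmegaSet p (M ∪ N),
    (∃ bs ∈ OmegaSet p M ∪ OmegaSet p N ∪ PrepSet p K, I.val (B bs) ≤ I.val (B b)) ∧
    (∃ bu ∈ OmegaSet p M ∪ OmegaSet p N ∪ PrepSet p K, I.val (B b) ≤ I.val (B bu))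

/-! ### Concrete branch evaluations -/

/-- Supported (completion) branch evaluation: maps a branch to its second element. -/
def Bsp (JF : JFrame F) : Branch F → F
  | .fin l => l[1]?.getD JF.uLit
  | .inf s => s 1

/-- Kripke-Kleene branch evaluation. -/
def Bkk (JF : JFrame F) : Branch F → F
  | .fin l => l.getLastD JF.uLit
  | .inf _ => JF.uLit

/-- A sign function; `true` means positive, `false` negative. -/
structure SignFn (JF : JFrame F) where
  sgn : F → Bool
  sgn_compl : ∀ x ∈ JF.defined, sgn (JF.compl x) ≠ sgn x

/-- Well-founded branch evaluation. -/
noncomputable def Bwf (JF : JFrame F) (sg : SignFn JF) : Branch F → F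
  | .fin l => l.getLastD JF.uLit
  | .inf s =>
    if ∃ n, ∀ i ≥ n, sg.sgn (s i) = false then JF.tLit
    else if ∃ n, ∀ i ≥ n, sg.sgn (s i) = true then JF.fLit
    else JF.uLit

/-- Stable branch evaluation. -/
noncomputable def Bst (JF : JFrame F) (sg : SignFn JF) : Branch F → F
  | .fin l =>
    match l with
    | [] => JF.uLit
    | x0 :: rest =>
      match rest.find? (fun y => sg.sgn y != sg.sgn x0) with
      | some y => y
      | none => Bwf JF sg (.fin (x0 :: rest))
  | .inf s =>
    if h : ∃ i, sg.sgn (s i) ≠ sg.sgn (s 0) then s (Nat.find h)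
    else Bwf JF sg (.inf s)

end JT

/-!
Restrict `J` to the facts reachable from `x`. Every maximal path of the restriction is a
maximal path of `J`, since a reachable node keeps all its outgoing edges; so the restriction
has fewer branches from `x`, and an infimum over fewer branches can only grow.
-/

namespace JT

namespace GraphJust

variable {F : Type} {JF : JFrame F}

theorem IsRoot.connected {J : GraphJust JF} {x : F} (hroot : J.IsRoot x) : J.Connected := by
  intro a ha b hb
  have hax : Relation.ReflTransGen (fun u v => (u, v) ∈ J.edges ∨ (v, u) ∈ J.edges) a x :=
    Relation.ReflTransGen.mono (fun _ _ h => Or.inr h) _ _ (hroot.2 a ha).swap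
  exact hax.trans (Relation.ReflTransGen.mono (fun _ _ h => Or.inl h) _ _ (hroot.2 b hb))

theorem isBranchFrom_of_subgraph {J J' : GraphJust JF}
    (hnodes : J'.nodes ⊆ J.nodes) (hedges : J'.edges ⊆ J.edges)
    (hout : ∀ a ∈ J'.nodes, ∀ b, (a, b) ∈ J.edges → (a, b) ∈ J'.edges)
    {x : F} {b : Branch F} (hb : J'.IsBranchFrom x b) :
    J.IsBranchFrom x b := by
  cases b with
  | fin l =>
    obtain ⟨hhead, hmem, hchain, hlast⟩ := hb
    refine ⟨hhead, fun a ha => hnodes (hmem a ha), hchain.imp fun _ _ h => hedges h, ?_⟩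
    intro e he y hey
    exact hlast e he y (hout e (hmem e (List.mem_of_getLast? he)) y hey)
  | inf s =>
    obtain ⟨hhead, hmem, hstep⟩ := hb
    exact ⟨hhead, fun n => hnodes (hmem n), fun n => hedges (hstep n)⟩

theorem val_le_val_of_subgraph {J J' : GraphJust JF}
    (hnodes : J'.nodes ⊆ J.nodes) (hedges : J'.edges ⊆ J.edges)
    (hout : ∀ a ∈ J'.nodes, ∀ b, (a, b) ∈ J.edges → (a, b) ∈ J'.edges)
    (B : Branch F → F) (x : F) (I : Interp JF) :
    J.val B x I ≤ J'.val B x I :=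
  biInf_mono fun _ hb => isBranchFrom_of_subgraph hnodes hedges hout hb

def reachableFrom (J : GraphJust JF) (x : F) : GraphJust JF where
  nodes := {y | Relation.ReflTransGen (fun a b => (a, b) ∈ J.edges) x y}
  edges := {e | e ∈ J.edges ∧ Relation.ReflTransGen (fun a b => (a, b) ∈ J.edges) x e.1}
  edges_mem := fun _ he => ⟨he.2, he.2.tail he.1⟩
  rule_of_internal := by
    rintro y hy ⟨z, hz, -⟩
    have hsame : {z | (y, z) ∈ J.edges ∧
        Relation.ReflTransGen (fun a b => (a, b) ∈ J.edges) x y} = {z | (y, z) ∈ J.edges} := by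
      ext; exact and_iff_left hy
    exact hsame ▸ J.rule_of_internal y (J.edges_mem _ hz).1 ⟨z, hz⟩

variable {J : GraphJust JF} {x : F}

theorem reachableFrom_nodes_subset (hxn : x ∈ J.nodes) :
    (J.reachableFrom x).nodes ⊆ J.nodes := by
  intro y hy
  induction hy with
  | refl => exact hxn
  | tail _ hedge _ => exact (J.edges_mem _ hedge).2

theorem reachableFrom_isRoot : (J.reachableFrom x).IsRoot x := by
  refine ⟨Relation.ReflTransGen.refl, fun y hy => ?_⟩
  induction hy with
  | refl => exact Relation.ReflTransGen.refl
  | tail hreach hedge ih => exact ih.tail ⟨hedge, hreach⟩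

theorem reachableFrom_locallyComplete (hJ : J.LocallyComplete) (hxn : x ∈ J.nodes) :
    (J.reachableFrom x).LocallyComplete := by
  intro y hy hyd
  obtain ⟨z, hz⟩ := hJ y (reachableFrom_nodes_subset hxn hy) hyd
  exact ⟨z, hz, hy⟩

theorem val_le_val_reachableFrom (hxn : x ∈ J.nodes) (B : Branch F → F) (I : Interp JF) :
    J.val B x I ≤ (J.reachableFrom x).val B x I :=
  val_le_val_of_subgraph (reachableFrom_nodes_subset hxn) (fun _ he => he.1)
    (fun _ ha _ hab => ⟨hab, ha⟩) B x I

end GraphJust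

theorem stmt0_general {F : Type} (JF : JFrame F) (B : Branch F → F)
    (J : GraphJust JF) (hJ : J.LocallyComplete)
    (x : F) (hxn : x ∈ J.nodes) :
    ∃ J' : GraphJust JF, J'.LocallyComplete ∧ J'.Connected ∧ J'.IsRoot x ∧
      ∀ I : Interp JF, J.val B x I ≤ J'.val B x I :=
  ⟨J.reachableFrom x, GraphJust.reachableFrom_locallyComplete hJ hxn,
    GraphJust.reachableFrom_isRoot.connected, GraphJust.reachableFrom_isRoot,
    GraphJust.val_le_val_reachableFrom hxn B⟩

theorem stmt0 {F : Type} (JF : JFrame F) (B : Branch F → F)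
    (J : GraphJust JF) (hJ : J.LocallyComplete)
    (x : F) (hx : x ∈ JF.defined) (hxn : x ∈ J.nodes) (hint : ∃ y, (x, y) ∈ J.edges) :
    ∃ J' : GraphJust JF, J'.LocallyComplete ∧ J'.Connected ∧ J'.IsRoot x ∧
      ∀ I : Interp JF, J.val B x I ≤ J'.val B x I :=
  stmt0_general JF B J hJ x hxn

end JT
end

section
/- Let G be a game graph arising from a justification frame JF: the player T owns the facts, player F owns the rule symbols, with edges from each defined fact x to each rule symbol r_{x←A} and from r_{x←A} to each y ∈ A. Then for any positional strategy σ for T and any defined fact x, the play graph of σ in x with rule symbols filtered out is a connected, locally complete graph-like justification with x as a root in JF. -/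
/-!
The successors of a reached fact in the filtered play graph are exactly the body of the rule that
`σ` picks there, which gives the rule condition of a justification and, since bodies are
nonempty, local completeness. A rule symbol can only be entered from a fact, so every reached fact
is reached from `x` along filtered edges: `x` is a root, and a graph with a root is connected.
-/

namespace JT

theorem GraphJust.IsRoot.connected_s2 {F : Type} {JF : JFrame F} {J : GraphJust JF} {x : F}
    (h : J.IsRoot x) : J.Connected := by
  intro a ha b hb
  have toSymm : ∀ {u v}, Relation.ReflTransGen (fun a b => (a, b) ∈ J.edges) u v →
      Relation.ReflTransGen (fun a b => (a, b) ∈ J.edges ∨ (b, a) ∈ J.edges) u v :=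
    fun huv => Relation.ReflTransGen.mono (fun _ _ => Or.inl) _ _ huv
  have hxa := Relation.reflTransGen_swap.mpr (h.2 a ha)
  exact (Relation.ReflTransGen.mono (fun _ _ => Or.inr) _ _ hxa).trans (toSymm (h.2 b hb))

section

variable {F : Type} {JF : JFrame F}

@[simp]
lemma game_E_inl_inr {a : F} {r : RuleSym JF} :
    (Sum.inl a, Sum.inr r) ∈ JF.game.E ↔ r.1.1 = a := by
  simp [JFrame.game, eq_comm]

@[simp]
lemma game_E_inr_inl {r : RuleSym JF} {y : F} :
    (Sum.inr r, Sum.inl y) ∈ JF.game.E ↔ y ∈ r.1.2 := by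
  simp [JFrame.game]

@[simp]
lemma game_E_inl_inl {a b : F} : (Sum.inl a, Sum.inl b) ∉ JF.game.E := by
  simp [JFrame.game]

@[simp]
lemma game_E_inr_inr {r s : RuleSym JF} : (Sum.inr r, Sum.inr s) ∉ JF.game.E := by
  simp [JFrame.game]

@[simp]
lemma game_T_inl (a : F) : (Sum.inl a : GState JF) ∈ JF.game.T := ⟨a, rfl⟩

@[simp]
lemma game_T_inr (r : RuleSym JF) : (Sum.inr r : GState JF) ∉ JF.game.T := by
  simp [JFrame.game]

namespace JFrame

variable (σ : PosStrat JF.game JF.game.T) {x : F}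

lemma stepT_inl_inr {a : F} {r : RuleSym JF} :
    JF.stepT σ (Sum.inl a) (Sum.inr r) ↔ r.1.1 = a ∧ σ.move (Sum.inl a) = Sum.inr r := by
  simp [stepT, eq_comm]

lemma stepT_inr_inl {r : RuleSym JF} {y : F} :
    JF.stepT σ (Sum.inr r) (Sum.inl y) ↔ y ∈ r.1.2 := by
  simp [stepT]

lemma not_stepT_inl_inl {a b : F} : ¬ JF.stepT σ (Sum.inl a) (Sum.inl b) :=
  fun h => game_E_inl_inl h.1

lemma not_stepT_inr_inr {r s : RuleSym JF} : ¬ JF.stepT σ (Sum.inr r) (Sum.inr s) :=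
  fun h => game_E_inr_inr h.1

lemma exists_stepT_of_mem_defined {y : F} (hy : y ∈ JF.defined) :
    ∃ r : RuleSym JF, JF.stepT σ (Sum.inl y) (Sum.inr r) := by
  obtain ⟨A, hA⟩ := JF.rules_ex y hy
  have hmove := σ.move_ok _ (game_T_inl y) ⟨Sum.inr ⟨(y, A), hA⟩, game_E_inl_inr.2 rfl⟩
  rcases hσ : σ.move (Sum.inl y) with b | r
  · exact absurd (hσ ▸ hmove) game_E_inl_inl
  · exact ⟨r, hσ ▸ hmove, fun _ => hσ.symm⟩

lemma setOf_filtEdgesT_eq_body {a : F} {r : RuleSym JF} (ha : Sum.inl a ∈ JF.reachT σ x)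
    (hr : JF.stepT σ (Sum.inl a) (Sum.inr r)) :
    {y | (a, y) ∈ JF.filtEdgesT σ x} = r.1.2 := by
  ext y
  refine ⟨fun ⟨r', _, hr', hy⟩ => ?_, fun hy => ⟨r, ha, hr, (stepT_inr_inl σ).2 hy⟩⟩
  have : r' = r := Sum.inr_injective <|
    ((stepT_inl_inr σ).1 hr').2.symm.trans ((stepT_inl_inr σ).1 hr).2
  exact this ▸ (stepT_inr_inl σ).1 hy

/-- The second conjunct strengthens the induction: a reached rule symbol remembers the fact it
was entered from. -/
lemma reflTransGen_filtEdgesT_of_mem_reachT {s : GState JF} (hs : s ∈ JF.reachT σ x) :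
    (∀ y, s = Sum.inl y → Relation.ReflTransGen (fun a b => (a, b) ∈ JF.filtEdgesT σ x) x y) ∧
    (∀ r, s = Sum.inr r → ∃ y, Relation.ReflTransGen (fun a b => (a, b) ∈ JF.filtEdgesT σ x) x y ∧
      Sum.inl y ∈ JF.reachT σ x ∧ JF.stepT σ (Sum.inl y) (Sum.inr r)) := by
  induction hs with
  | refl => exact ⟨fun y hy => Sum.inl_injective hy ▸ .refl, fun _ hr => absurd hr Sum.inl_ne_inr⟩
  | @tail b c hb hbc ih =>
    rcases b with a | r <;> rcases c with y | r'
    · exact absurd hbc (not_stepT_inl_inl σ)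
    · exact ⟨fun _ hy => absurd hy Sum.inr_ne_inl,
        fun r hr => Sum.inr_injective hr ▸ ⟨a, ih.1 a rfl, hb, hbc⟩⟩
    · obtain ⟨a, hxa, ha, har⟩ := ih.2 r rfl
      exact ⟨fun y' hy => Sum.inl_injective hy ▸ hxa.tail ⟨r, ha, har, hbc⟩,
        fun _ hr => absurd hr Sum.inl_ne_inr⟩
    · exact absurd hbc (not_stepT_inr_inr σ)

def filtJustT (x : F) : GraphJust JF where
  nodes := JF.filtNodesT σ x
  edges := JF.filtEdgesT σ x
  edges_mem := fun _ ⟨_, ha, har, hry⟩ => ⟨ha, (ha.tail har).tail hry⟩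
  rule_of_internal := by
    rintro a - ⟨_, r, ha, har, -⟩
    rw [setOf_filtEdgesT_eq_body σ ha har]
    exact (Prod.ext ((stepT_inl_inr σ).1 har).1 rfl : r.1 = (a, r.1.2)) ▸ r.2

lemma filtJustT_locallyComplete : (JF.filtJustT σ x).LocallyComplete := by
  intro y hy hyd
  obtain ⟨r, hyr⟩ := exists_stepT_of_mem_defined σ hyd
  obtain ⟨z, hz⟩ := JF.rules_body_ne r.1 r.2
  exact ⟨z, r, hy, hyr, (stepT_inr_inl σ).2 hz⟩

lemma filtJustT_isRoot : (JF.filtJustT σ x).IsRoot x :=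
  ⟨.refl, fun y hy => (reflTransGen_filtEdgesT_of_mem_reachT σ hy).1 y rfl⟩

end JFrame

end

theorem stmt2_general {F : Type} (JF : JFrame F) (σ : PosStrat JF.game JF.game.T)
    (x : F) :
    ∃ J : GraphJust JF, J.nodes = JF.filtNodesT σ x ∧ J.edges = JF.filtEdgesT σ x ∧
      J.LocallyComplete ∧ J.Connected ∧ J.IsRoot x :=
  ⟨JF.filtJustT σ x, rfl, rfl, JF.filtJustT_locallyComplete σ,
    (JF.filtJustT_isRoot σ).connected_s2, JF.filtJustT_isRoot σ⟩

theorem stmt2 {F : Type} (JF : JFrame F) (σ : PosStrat JF.game JF.game.T)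
    (x : F) (hx : x ∈ JF.defined) :
    ∃ J : GraphJust JF, J.nodes = JF.filtNodesT σ x ∧ J.edges = JF.filtEdgesT σ x ∧
      J.LocallyComplete ∧ J.Connected ∧ J.IsRoot x :=
  stmt2_general JF σ x

end JT
end

section
/- Every connected, locally complete graph-like justification J with root x in a justification frame JF equals J_σ(x) for some positional strategy σ for player T in the game graph G_JF, where J_σ(x) denotes the play graph of σ at x with rule symbols filtered out. -/
namespace JT

/-!
𝐓 plays, at every fact with outgoing `J`-edges, the rule formed by those edges, and any legal
move elsewhere. Since plays alternate between facts and rule symbols, the filtered play graph of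
a positional strategy at `x` is the graph reachable from `x` under the contracted steps
`y → r_{y←A} → z`. Local completeness makes the strategy pick `J`'s own rule at every defined
node of `J`, so on the nodes of `J` the contracted steps are exactly the edges of `J`; as `x` is
a root of `J`, both graphs reach the same nodes.
-/

variable {F : Type} {JF : JFrame F}

section PlayGraph

variable {σ : PosStrat JF.game JF.game.T} {x y z : F} {r : RuleSym JF}

def JFrame.filtStepT (JF : JFrame F) (σ : PosStrat JF.game JF.game.T) (y z : F) : Prop :=
  ∃ r : RuleSym JF, JF.stepT σ (Sum.inl y) (Sum.inr r) ∧ JF.stepT σ (Sum.inr r) (Sum.inl z)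

lemma JFrame.not_stepT_inl_inl_s3 : ¬ JF.stepT σ (Sum.inl y) (Sum.inl z) := by
  simp [JFrame.stepT, JFrame.game]

lemma JFrame.not_stepT_inr_inr_s3 {r' : RuleSym JF} : ¬ JF.stepT σ (Sum.inr r) (Sum.inr r') := by
  simp [JFrame.stepT, JFrame.game]

lemma JFrame.stepT_inl_inr_iff :
    JF.stepT σ (Sum.inl y) (Sum.inr r) ↔ r.1.1 = y ∧ Sum.inr r = σ.move (Sum.inl y) := by
  simp [JFrame.stepT, JFrame.game, eq_comm]

lemma JFrame.stepT_inr_inl_iff : JF.stepT σ (Sum.inr r) (Sum.inl z) ↔ z ∈ r.1.2 := by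
  simp [JFrame.stepT, JFrame.game]

lemma JFrame.reachT_cases {s : GState JF} (hs : s ∈ JF.reachT σ x) :
    (∀ y, s = Sum.inl y → Relation.ReflTransGen (JF.filtStepT σ) x y) ∧
    (∀ r, s = Sum.inr r →
      ∃ y, Relation.ReflTransGen (JF.filtStepT σ) x y ∧ JF.stepT σ (Sum.inl y) (Sum.inr r)) := by
  induction hs with
  | refl => exact ⟨fun y hy => Sum.inl_injective hy ▸ .refl, fun r hr => nomatch hr⟩
  | @tail a b _ hab ih =>
    constructor
    · rintro z rfl
      rcases a with y | r
      · exact absurd hab JFrame.not_stepT_inl_inl_s3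
      · obtain ⟨y, hxy, hyr⟩ := ih.2 r rfl
        exact hxy.tail ⟨r, hyr, hab⟩
    · rintro r rfl
      rcases a with y | r'
      · exact ⟨y, ih.1 y rfl, hab⟩
      · exact absurd hab JFrame.not_stepT_inr_inr_s3

lemma JFrame.mem_filtNodesT_iff :
    y ∈ JF.filtNodesT σ x ↔ Relation.ReflTransGen (JF.filtStepT σ) x y := by
  refine ⟨fun hy => (JF.reachT_cases hy).1 y rfl, fun h => ?_⟩
  induction h with
  | refl => exact .refl
  | tail _ hstep ih =>
    obtain ⟨r, hyr, hrz⟩ := hstep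
    exact (ih.tail hyr).tail hrz

lemma JFrame.mem_filtEdgesT_iff {e : F × F} :
    e ∈ JF.filtEdgesT σ x ↔ e.1 ∈ JF.filtNodesT σ x ∧ JF.filtStepT σ e.1 e.2 :=
  ⟨fun ⟨r, h, hs⟩ => ⟨h, r, hs⟩, fun ⟨h, r, hs⟩ => ⟨r, h, hs⟩⟩

end PlayGraph

namespace GraphJust

variable {J : GraphJust JF} {x y z : F}

def ruleAt (J : GraphJust JF) {y : F} (h : ∃ z, (y, z) ∈ J.edges) : RuleSym JF :=
  ⟨(y, {z | (y, z) ∈ J.edges}), J.rule_of_internal y (J.edges_mem _ h.choose_spec).1 h⟩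

open Classical in
noncomputable def strategy (J : GraphJust JF) : PosStrat JF.game JF.game.T where
  move
    | .inl y =>
      if h : ∃ z, (y, z) ∈ J.edges then .inr (J.ruleAt h)
      else Classical.epsilon fun t => (Sum.inl y, t) ∈ JF.game.E
    | .inr r => .inr r
  move_ok := by
    rintro _ ⟨y, rfl⟩ hmove
    by_cases h : ∃ z, (y, z) ∈ J.edges
    · simp only [h, dite_true]
      exact Or.inl ⟨y, _, rfl, rfl⟩
    · simp only [h, dite_false]
      exact Classical.epsilon_spec hmove

lemma strategy_move_inl (h : ∃ z, (y, z) ∈ J.edges) :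
    J.strategy.move (Sum.inl y) = Sum.inr (J.ruleAt h) := by
  simp [strategy, h]

lemma filtStepT_strategy_of_mem_edges (h : (y, z) ∈ J.edges) : JF.filtStepT J.strategy y z :=
  ⟨J.ruleAt ⟨z, h⟩, JFrame.stepT_inl_inr_iff.2 ⟨rfl, (strategy_move_inl _).symm⟩,
    JFrame.stepT_inr_inl_iff.2 h⟩

lemma filtStepT_strategy_iff (hlc : J.LocallyComplete) (hy : y ∈ J.nodes) :
    JF.filtStepT J.strategy y z ↔ (y, z) ∈ J.edges := by
  refine ⟨fun ⟨r, hyr, hrz⟩ => ?_, filtStepT_strategy_of_mem_edges⟩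
  obtain ⟨hhead, hmove⟩ := JFrame.stepT_inl_inr_iff.1 hyr
  have hdef : y ∈ JF.defined := hhead ▸ JF.rules_head r.1 r.2
  have hout := hlc y hy hdef
  obtain rfl : r = J.ruleAt hout := Sum.inr_injective (hmove.trans (strategy_move_inl hout))
  exact JFrame.stepT_inr_inl_iff.1 hrz

lemma mem_nodes_of_reflTransGen (hx : x ∈ J.nodes)
    (h : Relation.ReflTransGen (fun a b => (a, b) ∈ J.edges) x y) : y ∈ J.nodes := by
  induction h with
  | refl => exact hx
  | tail _ hedge _ => exact (J.edges_mem _ hedge).2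

lemma IsRoot.mem_nodes_iff (hroot : J.IsRoot x) :
    y ∈ J.nodes ↔ Relation.ReflTransGen (fun a b => (a, b) ∈ J.edges) x y :=
  ⟨hroot.2 y, mem_nodes_of_reflTransGen hroot.1⟩

lemma reflTransGen_filtStepT_strategy_iff (hlc : J.LocallyComplete) (hx : x ∈ J.nodes) :
    Relation.ReflTransGen (JF.filtStepT J.strategy) x y ↔
      Relation.ReflTransGen (fun a b => (a, b) ∈ J.edges) x y := by
  constructor
  · intro h
    induction h with
    | refl => exact .refl
    | tail _ hstep ih =>
      exact ih.tail ((filtStepT_strategy_iff hlc (mem_nodes_of_reflTransGen hx ih)).1 hstep)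
  · exact Relation.ReflTransGen.mono (fun _ _ => filtStepT_strategy_of_mem_edges) x y

end GraphJust

theorem stmt3_general {F : Type} (JF : JFrame F) (J : GraphJust JF) (x : F)
    (hlc : J.LocallyComplete) (hroot : J.IsRoot x) :
    ∃ σ : PosStrat JF.game JF.game.T,
      J.nodes = JF.filtNodesT σ x ∧ J.edges = JF.filtEdgesT σ x := by
  have hnodes : ∀ y, y ∈ JF.filtNodesT J.strategy x ↔ y ∈ J.nodes := fun y => by
    rw [JFrame.mem_filtNodesT_iff, GraphJust.reflTransGen_filtStepT_strategy_iff hlc hroot.1,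
      hroot.mem_nodes_iff]
  refine ⟨J.strategy, Set.ext fun y => (hnodes y).symm, Set.ext fun ⟨y, z⟩ => ?_⟩
  rw [JFrame.mem_filtEdgesT_iff, hnodes]
  exact ⟨fun he => ⟨(J.edges_mem _ he).1, GraphJust.filtStepT_strategy_of_mem_edges he⟩,
    fun ⟨hy, hstep⟩ => (GraphJust.filtStepT_strategy_iff hlc hy).1 hstep⟩

theorem stmt3 {F : Type} (JF : JFrame F) (J : GraphJust JF) (x : F)
    (hlc : J.LocallyComplete) (hcon : J.Connected) (hroot : J.IsRoot x) :
    ∃ σ : PosStrat JF.game JF.game.T,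
      J.nodes = JF.filtNodesT σ x ∧ J.edges = JF.filtEdgesT σ x :=
  stmt3_general JF J x hlc hroot

end JT
end

section
/- The supported branch evaluation B_sp, which maps every branch x0 → x1 → ... (of length at least 2) to x1, is monotone and selective with respect to every interpretation. -/
namespace JT

/-! `B_sp` reads off the second fact of a branch, so `B_sp(p → b)` depends only on `p` and
the first fact of `b` once `p` is nonempty: monotonicity is then an equality. For selectivity,
a branch `p q ...` whose first loop is `q` (or `p k` with `k ∈ K` when there is no loop)
has the same value as `p q^ω`, because `q^ω = q q^ω` and both continuations after `p q`
start at `x`. The witnesses thus have equal value, serving as both `b_*` and `b^*`. -/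

variable {F : Type}

namespace Branch

@[simp]
theorem prepend_nil (b : Branch F) : prepend [] b = b := by
  cases b <;> simp [prepend]

theorem prepend_inf (p : List F) (s : ℕ → F) : prepend p (.inf s) = .inf (p ++ₛ s) := by
  simp only [prepend]
  congr 1
  funext n
  split_ifs with h
  · exact (Stream'.get_append_left n p s h).symm
  · obtain ⟨m, rfl⟩ := Nat.exists_eq_add_of_le (not_lt.mp h)
    simp only [Nat.add_sub_cancel_left]
    exact (Stream'.get_append_right m p s).symm

theorem prepend_append (p w : List F) (b : Branch F) :
    prepend (p ++ w) b = prepend p (prepend w b) := by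
  cases b with
  | fin l => simp [prepend]
  | inf s =>
    rw [prepend_inf, prepend_inf, prepend_inf (s := w ++ₛ s)]
    exact congrArg inf (Stream'.append_append_stream p w s)

theorem startsAt_prepend {p : List F} {x : F} (hp : p.head? = some x) (b : Branch F) :
    (prepend p b).startsAt x := by
  cases p with
  | nil => simp at hp
  | cons a p =>
    cases b with
    | fin l => simpa [prepend, startsAt] using hp
    | inf s => exact Option.some.inj hp

theorem startsAt_prepend_flatten {ls : List (List F)} {x : F}
    (hls : ∀ l ∈ ls, l.head? = some x) {b : Branch F} (hb : b.startsAt x) :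
    (prepend ls.flatten b).startsAt x := by
  cases ls with
  | nil => simpa using hb
  | cons l ls =>
    have hl := hls l List.mem_cons_self
    refine startsAt_prepend ?_ b
    rw [List.flatten_cons, List.head?_append, hl, Option.some_or]

end Branch

theorem IsConcat.exists_eq_append {f : ℕ → List F} {s : ℕ → F} (hs : IsConcat f s) {x : F}
    (hf1 : (f 1).head? = some x) : ∃ t : ℕ → F, s = f 0 ++ₛ t ∧ t 0 = x := by
  obtain ⟨c, hc0, hc, hcs⟩ := hs
  refine ⟨fun n => s ((f 0).length + n), funext fun n => ?_, ?_⟩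
  · rcases lt_or_ge n (f 0).length with hn | hn
    · have h := hcs 0 n hn
      rw [hc0, zero_add] at h
      exact h.trans (Stream'.get_append_left n (f 0) _ hn).symm
    · obtain ⟨m, rfl⟩ := Nat.exists_eq_add_of_le hn
      exact (Stream'.get_append_right m (f 0) (fun n => s ((f 0).length + n))).symm
  · have hlen : 0 < (f 1).length := by cases h : f 1 <;> simp_all
    have h := hcs 1 0 hlen
    rw [hc, hc0, zero_add] at h
    refine h.trans ?_
    simpa [List.head?_eq_getElem?, List.getElem?_eq_getElem hlen] using hf1

theorem cycle_get_mul_add (q : List F) (hne : q ≠ []) (i : ℕ) {k : ℕ} (hk : k < q.length) :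
    Stream'.cycle q hne (i * q.length + k) = q[k] := by
  induction i with
  | zero =>
    rw [zero_mul, zero_add, Stream'.cycle_eq q hne]
    exact Stream'.get_append_left k q _ hk
  | succ i ih =>
    rw [add_one_mul, add_comm _ q.length, add_assoc, Stream'.cycle_eq q hne]
    exact (Stream'.get_append_right _ q _).trans ih

theorem cycle_mem_InfIter {L : Set (List F)} {q : List F} (hq : q ∈ L) (hne : q ≠ []) :
    Branch.inf (Stream'.cycle q hne) ∈ InfIter L :=
  ⟨fun _ => q, _, fun _ => hq, fun _ => hne, ⟨fun i => i * q.length, zero_mul _,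
    fun i => add_one_mul i q.length, fun i _ hk => cycle_get_mul_add q hne i hk⟩, rfl⟩

theorem cycle_mem_omegaSet_union {p q : List F} {M N : Set (List F)} (hq : q ∈ M ∪ N)
    (hne : q ≠ []) :
    Branch.prepend p (.inf (Stream'.cycle q hne)) ∈ OmegaSet p M ∪ OmegaSet p N := by
  rcases hq with hq | hq
  · exact Or.inl ⟨_, cycle_mem_InfIter hq hne, rfl⟩
  · exact Or.inr ⟨_, cycle_mem_InfIter hq hne, rfl⟩

namespace JFrame

variable (JF : JFrame F)

theorem Bsp_prepend_cons {b : Branch F} {x : F} (hb : b.startsAt x) (a : F) (p : List F) :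
    Bsp JF (Branch.prepend (a :: p) b) = p.head?.getD x := by
  cases b with
  | fin l =>
    cases p with
    | nil =>
      simp only [Branch.startsAt] at hb
      simp [Branch.prepend, Bsp, ← List.head?_eq_getElem?, hb]
    | cons c p => simp [Branch.prepend, Bsp]
  | inf s =>
    rw [Branch.prepend_inf]
    cases p with
    | nil => exact hb
    | cons c p => rfl

theorem Bsp_prepend_prepend_eq_cycle (p : List F) {q : List F} {x : F} (hq : q.head? = some x)
    (hne : q ≠ []) {d : Branch F} (hd : d.startsAt x) :
    Bsp JF (Branch.prepend p (Branch.prepend q d)) =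
      Bsp JF (Branch.prepend p (.inf (Stream'.cycle q hne))) := by
  have hcycle :
      Branch.inf (Stream'.cycle q hne) = Branch.prepend q (.inf (Stream'.cycle q hne)) :=
    (congrArg Branch.inf (Stream'.cycle_eq q hne)).trans (Branch.prepend_inf q _).symm
  have hstart : (Branch.inf (Stream'.cycle q hne)).startsAt x :=
    hcycle ▸ Branch.startsAt_prepend hq _
  obtain ⟨a, r, hpq⟩ := List.exists_cons_of_ne_nil (List.append_ne_nil_of_right_ne_nil p hne)
  rw [hcycle, ← Branch.prepend_append, ← Branch.prepend_append, hpq, Bsp_prepend_cons JF hd,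
    Bsp_prepend_cons JF hstart]

section Selectivity

variable {p : List F} {x : F} {M N : Set (List F)}

theorem exists_Bsp_eq_of_mem_starKSet {K : Set (Branch F)}
    (hMN : ∀ q ∈ M ∪ N, q.head? = some x) (hK : ∀ k ∈ K, k.startsAt x) {b : Branch F}
    (hb : b ∈ StarKSet p (M ∪ N) K) :
    ∃ c ∈ OmegaSet p M ∪ OmegaSet p N ∪ PrepSet p K, Bsp JF c = Bsp JF b := by
  obtain ⟨_, ⟨ls, hls, rfl⟩, k, hk, rfl⟩ := hb
  cases ls with
  | nil => exact ⟨_, Or.inr ⟨k, hk, rfl⟩, by simp⟩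
  | cons q ls =>
    have hq : q ∈ M ∪ N := hls q List.mem_cons_self
    have hne : q ≠ [] := by
      rintro rfl
      simpa using hMN _ hq
    have hrest : (Branch.prepend ls.flatten k).startsAt x :=
      Branch.startsAt_prepend_flatten
        (fun l hl => hMN l (hls l (List.mem_cons_of_mem q hl))) (hK k hk)
    refine ⟨_, Or.inl (cycle_mem_omegaSet_union hq hne), ?_⟩
    rw [List.flatten_cons, Branch.prepend_append, Branch.prepend_append]
    exact (Bsp_prepend_prepend_eq_cycle JF p (hMN q hq) hne hrest).symm

theorem exists_Bsp_eq_of_mem_omegaSet (hMN : ∀ q ∈ M ∪ N, q.head? = some x) {b : Branch F}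
    (hb : b ∈ OmegaSet p (M ∪ N)) :
    ∃ c ∈ OmegaSet p M ∪ OmegaSet p N, Bsp JF c = Bsp JF b := by
  obtain ⟨_, ⟨f, s, hfL, hfne, hs, rfl⟩, rfl⟩ := hb
  obtain ⟨t, rfl, ht⟩ := hs.exists_eq_append (hMN _ (hfL 1))
  refine ⟨_, cycle_mem_omegaSet_union (hfL 0) (hfne 0), ?_⟩
  rw [← Branch.prepend_inf]
  exact (Bsp_prepend_prepend_eq_cycle JF p (hMN _ (hfL 0)) (hfne 0) (d := .inf t) ht).symm

end Selectivity

theorem monotoneBE_Bsp : JF.MonotoneBE (Bsp JF) := by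
  intro I x _ b1 b2 _ _ h1 h2 p _ hle
  cases p with
  | nil => simpa using hle
  | cons a p => rw [Bsp_prepend_cons JF h1, Bsp_prepend_cons JF h2]

theorem selectiveBE_Bsp (I : Interp JF) : JF.SelectiveBE (Bsp JF) I := by
  intro p _ x _ M N hM hN K hK b hb
  have hMN : ∀ q ∈ M ∪ N, q.head? = some x := fun q hq =>
    hq.elim (fun hq => (hM q hq).1) (fun hq => (hN q hq).1)
  obtain ⟨c, hc, hcb⟩ :
      ∃ c ∈ OmegaSet p M ∪ OmegaSet p N ∪ PrepSet p K, Bsp JF c = Bsp JF b := by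
    rcases hb with hb | hb
    · exact exists_Bsp_eq_of_mem_starKSet JF hMN (fun k hk => (hK k hk).2) hb
    · obtain ⟨c, hc, hcb⟩ := exists_Bsp_eq_of_mem_omegaSet JF hMN hb
      exact ⟨c, Or.inl hc, hcb⟩
  exact ⟨⟨c, hc, hcb ▸ le_rfl⟩, ⟨c, hc, hcb ▸ le_rfl⟩⟩

end JFrame

theorem stmt14 {F : Type} (JF : JFrame F) :
    JF.MonotoneBE (Bsp JF) ∧ ∀ I : Interp JF, JF.SelectiveBE (Bsp JF) I :=
  ⟨JF.monotoneBE_Bsp, JF.selectiveBE_Bsp⟩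

end JT
end
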